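/- arXiv:1706.07393 — 4 statements merged into one kernel-verified Lean document; each statement's English description precedes it below -/
import Mathlib

section
/- For real numbers a_1,...,a_N and b_1,...,b_N and any 0 ≤ ℓ ≤ N, the average over permutations σ ∈ S_N of e_ℓ(a_1 b_{σ(1)}, ..., a_N b_{σ(N)}) equals e_ℓ(a) · e_ℓ(b) / C(N,ℓ), where e_ℓ is the elementary symmetric polynomial of degree ℓ. -/
open Finset

/-- The elementary symmetric polynomial of degree `ℓ` evaluated at `x : Fin N → ℝ`. -/
noncomputable def esymmVal (N ℓ : ℕ) (x : Fin N → ℝ) : ℝ :=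
  ∑ S ∈ Finset.powersetCard ℓ (Finset.univ : Finset (Fin N)), ∏ i ∈ S, x i

private noncomputable def permSum {N : ℕ} (b : Fin N → ℝ) (S : Finset (Fin N)) : ℝ :=
  ∑ σ : Equiv.Perm (Fin N), ∏ i ∈ S, b (σ i)

private lemma esymm_perm_invariant (N ℓ : ℕ) (b : Fin N → ℝ) (σ : Equiv.Perm (Fin N)) :
    ∑ S ∈ Finset.powersetCard ℓ (Finset.univ : Finset (Fin N)), ∏ i ∈ S, b (σ i)
      = esymmVal N ℓ b := by
  unfold esymmVal
  refine Finset.sum_nbij' (fun S => S.image σ) (fun T => T.image σ.symm) ?_ ?_ ?_ ?_ ?_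
  · intro S hS
    simp only [Finset.mem_powersetCard_univ] at *
    rw [Finset.card_image_of_injective _ σ.injective]; exact hS
  · intro T hT
    simp only [Finset.mem_powersetCard_univ] at *
    rw [Finset.card_image_of_injective _ σ.symm.injective]; exact hT
  · intro S _
    ext x
    simp only [Finset.mem_image]
    constructor
    · rintro ⟨y, ⟨z, hz, rfl⟩, rfl⟩; simpa using hz
    · intro hx; exact ⟨σ x, ⟨x, hx, rfl⟩, by simp⟩
  · intro T _
    ext x
    simp only [Finset.mem_image]
    constructor
    · rintro ⟨y, ⟨z, hz, rfl⟩, rfl⟩; simpa using hz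
    · intro hx; exact ⟨σ.symm x, ⟨x, hx, rfl⟩, by simp⟩
  · intro S _
    rw [Finset.prod_image (fun x _ y _ h => σ.injective h)]

private lemma image_perm_of_card_eq {N : ℕ} {S T : Finset (Fin N)} (h : S.card = T.card) :
    ∃ τ : Equiv.Perm (Fin N), S.image τ = T := by
  classical
  have e : {x : Fin N // x ∈ S} ≃ {x : Fin N // x ∈ T} :=
    Finset.equivOfCardEq h
  refine ⟨e.extendSubtype, ?_⟩
  apply Finset.eq_of_subset_of_card_le
  · intro x hx
    simp only [Finset.mem_image] at hx
    obtain ⟨y, hy, rfl⟩ := hx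
    exact e.extendSubtype_mem y hy
  · rw [Finset.card_image_of_injective _ (Equiv.injective _), h]

private lemma permSum_congr {N : ℕ} (b : Fin N → ℝ) {S T : Finset (Fin N)}
    (h : S.card = T.card) : permSum b S = permSum b T := by
  obtain ⟨τ, hτ⟩ := image_perm_of_card_eq h
  unfold permSum
  rw [← Equiv.sum_comp (Equiv.mulRight τ) (fun σ => ∏ i ∈ S, b (σ i))]
  refine Finset.sum_congr rfl fun σ _ => ?_
  rw [← hτ, Finset.prod_image (fun x _ y _ h => τ.injective h)]
  rfl

theorem avg_esymm_mul (N ℓ : ℕ) (hℓ : ℓ ≤ N) (a b : Fin N → ℝ) :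
    (∑ σ : Equiv.Perm (Fin N), esymmVal N ℓ (fun i => a i * b (σ i))) / (N.factorial : ℝ)
      = esymmVal N ℓ a * esymmVal N ℓ b / (N.choose ℓ : ℝ) := by
  classical
  have hC : (N.choose ℓ : ℝ) ≠ 0 := by exact_mod_cast (Nat.choose_pos hℓ).ne'
  have hF : (N.factorial : ℝ) ≠ 0 := by exact_mod_cast N.factorial_ne_zero
  have hsum : ∑ S ∈ Finset.powersetCard ℓ (Finset.univ : Finset (Fin N)), permSum b S
      = (N.factorial : ℝ) * esymmVal N ℓ b := by
    unfold permSum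
    rw [Finset.sum_comm]
    rw [Finset.sum_congr rfl (fun σ _ => esymm_perm_invariant N ℓ b σ)]
    rw [Finset.sum_const, Finset.card_univ, nsmul_eq_mul, Fintype.card_perm, Fintype.card_fin]
  have hconst : ∀ S ∈ Finset.powersetCard ℓ (Finset.univ : Finset (Fin N)),
      permSum b S = (N.factorial : ℝ) * esymmVal N ℓ b / (N.choose ℓ : ℝ) := by
    intro S hS
    have key : ∑ T ∈ Finset.powersetCard ℓ (Finset.univ : Finset (Fin N)), permSum b T
        = (N.choose ℓ : ℝ) * permSum b S := by
      have h1 : ∑ T ∈ Finset.powersetCard ℓ (Finset.univ : Finset (Fin N)), permSum b T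
          = ∑ _T ∈ Finset.powersetCard ℓ (Finset.univ : Finset (Fin N)), permSum b S :=
        Finset.sum_congr rfl (fun T hT => permSum_congr b (by
          rw [Finset.mem_powersetCard_univ] at hS hT; omega))
      rw [h1, Finset.sum_const, Finset.card_powersetCard, Finset.card_univ, Fintype.card_fin,
        nsmul_eq_mul]
    rw [hsum] at key
    field_simp
    linarith [key]
  have main : ∑ σ : Equiv.Perm (Fin N), esymmVal N ℓ (fun i => a i * b (σ i))
      = esymmVal N ℓ a * ((N.factorial : ℝ) * esymmVal N ℓ b / (N.choose ℓ : ℝ)) := by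
    unfold esymmVal
    rw [Finset.sum_comm]
    have : ∀ S ∈ Finset.powersetCard ℓ (Finset.univ : Finset (Fin N)),
        ∑ σ : Equiv.Perm (Fin N), ∏ i ∈ S, (a i * b (σ i))
          = (∏ i ∈ S, a i) * ((N.factorial : ℝ) * esymmVal N ℓ b / (N.choose ℓ : ℝ)) := by
      intro S hS
      have : ∑ σ : Equiv.Perm (Fin N), ∏ i ∈ S, (a i * b (σ i))
          = (∏ i ∈ S, a i) * permSum b S := by
        unfold permSum
        rw [Finset.mul_sum]
        exact Finset.sum_congr rfl fun σ _ => by rw [Finset.prod_mul_distrib]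
      rw [this, hconst S hS]
    rw [Finset.sum_congr rfl this, ← Finset.sum_mul]
    rfl
  rw [main]
  field_simp
end

section
/- For real numbers a_1,...,a_N and b_1,...,b_N and any 0 ≤ ℓ ≤ N, the average over permutations σ ∈ S_N of e_ℓ(a_1 + b_{σ(1)}, ..., a_N + b_{σ(N)}) equals the sum over p from 0 to ℓ of e_p(a) e_{ℓ-p}(b) · [N!/(N-ℓ)!] / ([N!/(N-p)!] · [N!/(N-ℓ+p)!]). -/
open Finset

lemma esymmVal_perm (N k : ℕ) (b : Fin N → ℝ) (σ : Equiv.Perm (Fin N)) :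
    esymmVal N k (fun i => b (σ i)) = esymmVal N k b := by
  unfold esymmVal
  refine Finset.sum_nbij' (fun S => S.image σ) (fun S => S.image σ.symm) ?_ ?_ ?_ ?_ ?_
  · intro S hS
    simp only [mem_powersetCard] at hS ⊢
    exact ⟨subset_univ _, by rw [Finset.card_image_of_injective _ σ.injective, hS.2]⟩
  · intro S hS
    simp only [mem_powersetCard] at hS ⊢
    exact ⟨subset_univ _, by rw [Finset.card_image_of_injective _ σ.symm.injective, hS.2]⟩
  · intro S _
    ext x
    simp [Finset.mem_image]
  · intro S _
    ext x
    simp [Finset.mem_image]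
  · intro S _
    rw [Finset.prod_image (fun x _ y _ h => σ.injective h)]

lemma sum_perm_prod_congr (N : ℕ) (b : Fin N → ℝ) (U U' : Finset (Fin N))
    (h : U.card = U'.card) :
    ∑ σ : Equiv.Perm (Fin N), ∏ i ∈ U, b (σ i)
      = ∑ σ : Equiv.Perm (Fin N), ∏ i ∈ U', b (σ i) := by
  classical
  have e : {x : Fin N // x ∈ U} ≃ {x : Fin N // x ∈ U'} := Finset.equivOfCardEq h
  let τ : Equiv.Perm (Fin N) := e.extendSubtype
  have himg : U.image τ = U' := by
    apply Finset.eq_of_subset_of_card_le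
    · intro x hx
      obtain ⟨y, hy, rfl⟩ := Finset.mem_image.1 hx
      exact e.extendSubtype_mem y hy
    · rw [Finset.card_image_of_injective _ τ.injective, ← h]
  have key : ∀ σ : Equiv.Perm (Fin N), ∏ i ∈ U', b (σ i) = ∏ i ∈ U, b (σ (τ i)) := by
    intro σ
    rw [← himg, Finset.prod_image (fun x _ y _ hxy => τ.injective hxy)]
  simp only [key]
  exact Fintype.sum_equiv (Equiv.mulRight τ⁻¹) _ _
    (fun σ => Finset.prod_congr rfl (fun i _ => by simp))

lemma sum_perm_prod_eq (N k : ℕ) (b : Fin N → ℝ) (U : Finset (Fin N)) (hU : U.card = k) :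
    (N.choose k : ℝ) * ∑ σ : Equiv.Perm (Fin N), ∏ i ∈ U, b (σ i)
      = (N.factorial : ℝ) * esymmVal N k b := by
  classical
  have h1 : ∑ V ∈ powersetCard k (univ : Finset (Fin N)),
      (∑ σ : Equiv.Perm (Fin N), ∏ i ∈ V, b (σ i))
      = (N.choose k : ℝ) * ∑ σ : Equiv.Perm (Fin N), ∏ i ∈ U, b (σ i) := by
    rw [Finset.sum_congr rfl (fun V hV =>
      sum_perm_prod_congr N b V U (by rw [(mem_powersetCard.1 hV).2, hU]))]
    rw [Finset.sum_const, card_powersetCard, card_univ, Fintype.card_fin, nsmul_eq_mul]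
  rw [← h1, Finset.sum_comm]
  have h2 : ∀ σ : Equiv.Perm (Fin N),
      ∑ V ∈ powersetCard k (univ : Finset (Fin N)), ∏ i ∈ V, b (σ i) = esymmVal N k b :=
    fun σ => esymmVal_perm N k b σ
  simp only [h2]
  rw [Finset.sum_const, card_univ, Fintype.card_perm, Fintype.card_fin, nsmul_eq_mul]

lemma sum_perm_prod_val (N k : ℕ) (b : Fin N → ℝ) (hk : k ≤ N)
    (U : Finset (Fin N)) (hU : U.card = k) :
    ∑ σ : Equiv.Perm (Fin N), ∏ i ∈ U, b (σ i)
      = (N.factorial : ℝ) * esymmVal N k b / (N.choose k : ℝ) := by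
  have hc : (N.choose k : ℝ) ≠ 0 := by
    exact_mod_cast (Nat.choose_pos hk).ne'
  rw [eq_div_iff hc, mul_comm _ ((N.choose k : ℝ)), sum_perm_prod_eq N k b U hU]

lemma card_filter_supersets (N ℓ p : ℕ) (T : Finset (Fin N)) (hT : T.card = p) (hp : p ≤ ℓ) :
    ((powersetCard ℓ (univ : Finset (Fin N))).filter fun S => T ⊆ S).card
      = (N - p).choose (ℓ - p) := by
  classical
  have hrw : (N - p).choose (ℓ - p)
      = (powersetCard (ℓ - p) ((univ : Finset (Fin N)) \ T)).card := by
    rw [card_powersetCard, card_sdiff_of_subset (subset_univ T), card_univ, Fintype.card_fin, hT]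
  rw [hrw]
  apply Finset.card_bij (fun S _ => S \ T)
  · intro S hS
    simp only [mem_filter, mem_powersetCard] at hS
    refine mem_powersetCard.2 ⟨sdiff_subset_sdiff hS.1.1 le_rfl, ?_⟩
    rw [card_sdiff_of_subset hS.2, hS.1.2, hT]
  · intro S hS S' hS' h
    simp only [mem_filter] at hS hS'
    have h1 : S \ T ∪ T = S := sdiff_union_of_subset hS.2
    have h2 : S' \ T ∪ T = S' := sdiff_union_of_subset hS'.2
    rw [← h1, ← h2, h]
  · intro W hW
    simp only [mem_powersetCard] at hW
    have hdisj : Disjoint W T := (Finset.subset_sdiff.1 hW.1).2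
    refine ⟨W ∪ T, ?_, ?_⟩
    · simp only [mem_filter, mem_powersetCard]
      refine ⟨⟨subset_univ _, ?_⟩, subset_union_right⟩
      rw [Finset.card_union_of_disjoint hdisj, hW.2, hT]
      omega
    · rw [Finset.union_sdiff_right, Finset.sdiff_eq_self_of_disjoint hdisj]

lemma coeff_eq (N ℓ p : ℕ) (hp : p ≤ ℓ) (hℓ : ℓ ≤ N) :
    ((N - p).choose (ℓ - p) : ℝ) / (N.choose (ℓ - p) : ℝ)
      = (N.descFactorial ℓ : ℝ) / ((N.descFactorial p : ℝ) * (N.descFactorial (ℓ - p) : ℝ)) := by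
  have hq : ℓ - p ≤ N - p := by omega
  have hqN : ℓ - p ≤ N := by omega
  have hNpq : N - p - (ℓ - p) = N - ℓ := by omega
  have hdesc : ∀ m : ℕ, m ≤ N →
      (N.descFactorial m : ℝ) = (N.factorial : ℝ) / ((N - m).factorial : ℝ) := by
    intro m hm
    rw [eq_div_iff (by exact_mod_cast (Nat.factorial_pos _).ne'), mul_comm]
    exact_mod_cast Nat.factorial_mul_descFactorial hm
  rw [Nat.cast_choose ℝ hq, Nat.cast_choose ℝ hqN, hdesc ℓ hℓ, hdesc p (hp.trans hℓ),
    hdesc (ℓ - p) hqN, hNpq]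
  have f1 : ((N - p).factorial : ℝ) ≠ 0 := by exact_mod_cast (Nat.factorial_pos _).ne'
  have f2 : ((ℓ - p).factorial : ℝ) ≠ 0 := by exact_mod_cast (Nat.factorial_pos _).ne'
  have f3 : ((N - ℓ).factorial : ℝ) ≠ 0 := by exact_mod_cast (Nat.factorial_pos _).ne'
  have f4 : ((N - (ℓ - p)).factorial : ℝ) ≠ 0 := by exact_mod_cast (Nat.factorial_pos _).ne'
  have f5 : (N.factorial : ℝ) ≠ 0 := by exact_mod_cast (Nat.factorial_pos _).ne'
  field_simp

theorem avg_esymm_add (N ℓ : ℕ) (hℓ : ℓ ≤ N) (a b : Fin N → ℝ) :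
    (∑ σ : Equiv.Perm (Fin N), esymmVal N ℓ (fun i => a i + b (σ i))) / (N.factorial : ℝ)
      = ∑ p ∈ Finset.range (ℓ + 1),
          esymmVal N p a * esymmVal N (ℓ - p) b *
            ((N.descFactorial ℓ : ℝ) /
              ((N.descFactorial p : ℝ) * (N.descFactorial (ℓ - p) : ℝ))) := by
  classical
  have hfac : (N.factorial : ℝ) ≠ 0 := by exact_mod_cast (Nat.factorial_pos _).ne'
  set G : ℕ → ℝ := fun k => (N.factorial : ℝ) * esymmVal N k b / (N.choose k : ℝ) with hG
  set f : Finset (Fin N) → ℝ := fun T => (∏ i ∈ T, a i) * G (ℓ - T.card) with hf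
  set A : Finset (Finset (Fin N)) := powersetCard ℓ (univ : Finset (Fin N)) with hA
  -- Step 1: expand and evaluate the permutation sums
  have step1 : ∑ σ : Equiv.Perm (Fin N), esymmVal N ℓ (fun i => a i + b (σ i))
      = ∑ S ∈ A, ∑ T ∈ S.powerset, f T := by
    unfold esymmVal
    rw [Finset.sum_comm]
    refine Finset.sum_congr rfl (fun S hS => ?_)
    rw [hA, mem_powersetCard] at hS
    have hexp : ∀ σ : Equiv.Perm (Fin N), ∏ i ∈ S, (a i + b (σ i))
        = ∑ T ∈ S.powerset, (∏ i ∈ T, a i) * ∏ i ∈ S \ T, b (σ i) :=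
      fun σ => Finset.prod_add _ _ _
    simp only [hexp]
    rw [Finset.sum_comm]
    refine Finset.sum_congr rfl (fun T hT => ?_)
    rw [← Finset.mul_sum]
    have hTS := Finset.mem_powerset.1 hT
    have hcard : (S \ T).card = ℓ - T.card := by rw [card_sdiff_of_subset hTS, hS.2]
    have hle : ℓ - T.card ≤ N := by omega
    rw [sum_perm_prod_val N (ℓ - T.card) b hle _ hcard]
  -- Step 2: swap the S and T sums
  have step2 : ∑ S ∈ A, ∑ T ∈ S.powerset, f T
      = ∑ T ∈ (univ : Finset (Fin N)).powerset,
          ((A.filter fun S => T ⊆ S).card : ℝ) * f T := by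
    have hps : ∀ S : Finset (Fin N),
        S.powerset = (univ : Finset (Fin N)).powerset.filter (fun T => T ⊆ S) := by
      intro S; ext T; simp [Finset.mem_powerset]
    calc ∑ S ∈ A, ∑ T ∈ S.powerset, f T
        = ∑ S ∈ A, ∑ T ∈ (univ : Finset (Fin N)).powerset, if T ⊆ S then f T else 0 := by
          refine Finset.sum_congr rfl fun S _ => ?_
          rw [hps S, Finset.sum_filter]
      _ = ∑ T ∈ (univ : Finset (Fin N)).powerset, ∑ S ∈ A, if T ⊆ S then f T else 0 :=
          Finset.sum_comm
      _ = ∑ T ∈ (univ : Finset (Fin N)).powerset,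
            ((A.filter fun S => T ⊆ S).card : ℝ) * f T := by
          refine Finset.sum_congr rfl fun T _ => ?_
          rw [← Finset.sum_filter, Finset.sum_const, nsmul_eq_mul]
  -- Step 3: group T's by cardinality
  have step3 : ∑ T ∈ (univ : Finset (Fin N)).powerset,
        ((A.filter fun S => T ⊆ S).card : ℝ) * f T
      = ∑ p ∈ Finset.range (ℓ + 1),
          ((N - p).choose (ℓ - p) : ℝ) * (esymmVal N p a * G (ℓ - p)) := by
    rw [Finset.powerset_card_biUnion,
      Finset.sum_biUnion ((Finset.pairwise_disjoint_powersetCard _).set_pairwise _), card_univ, Fintype.card_fin]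
    have hzero : ∀ p ∈ Finset.range (N + 1), p ∉ Finset.range (ℓ + 1) →
        ∑ T ∈ powersetCard p (univ : Finset (Fin N)),
          ((A.filter fun S => T ⊆ S).card : ℝ) * f T = 0 := by
      intro p _ hp2
      simp only [Finset.mem_range] at hp2
      refine Finset.sum_eq_zero fun T hT => ?_
      have hTp : T.card = p := (mem_powersetCard.1 hT).2
      have : (A.filter fun S => T ⊆ S) = ∅ := by
        rw [Finset.filter_eq_empty_iff]
        intro S hS hTS
        have := Finset.card_le_card hTS
        rw [hTp, (mem_powersetCard.1 hS).2] at this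
        omega
      rw [this]
      simp
    rw [← Finset.sum_subset (Finset.range_subset_range.2 (by omega)) hzero]
    refine Finset.sum_congr rfl fun p hp => ?_
    have hpℓ : p ≤ ℓ := by simpa [Nat.lt_succ_iff] using Finset.mem_range.1 hp
    have hcount : ∀ T ∈ powersetCard p (univ : Finset (Fin N)),
        ((A.filter fun S => T ⊆ S).card : ℝ) * f T
          = ((N - p).choose (ℓ - p) : ℝ) * ((∏ i ∈ T, a i) * G (ℓ - p)) := by
      intro T hT
      have hTp : T.card = p := (mem_powersetCard.1 hT).2
      rw [card_filter_supersets N ℓ p T hTp hpℓ, hf]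
      simp only [hTp]
    rw [Finset.sum_congr rfl hcount, ← Finset.mul_sum, ← Finset.sum_mul]
    unfold esymmVal
    ring
  rw [step1, step2, step3, Finset.sum_div]
  refine Finset.sum_congr rfl fun p hp => ?_
  have hpℓ : p ≤ ℓ := by simpa [Nat.lt_succ_iff] using Finset.mem_range.1 hp
  have hc : (N.choose (ℓ - p) : ℝ) ≠ 0 := by
    exact_mod_cast (Nat.choose_pos (by omega : ℓ - p ≤ N)).ne'
  rw [← coeff_eq N ℓ p hpℓ hℓ, hG]
  field_simp
end

section
/- For partitions λ, μ with at most N parts, the normalized Schur functions satisfy ŝ_μ(q^{λ_1}t^{N-1},...,q^{λ_N}) = ŝ_λ(q^{μ_1}t^{N-1},...,q^{μ_N}) when q = t, i.e. s_μ(q^{λ_1+N-1}, q^{λ_2+N-2},...,q^{λ_N})/s_μ(q^{N-1},...,1) = s_λ(q^{μ_1+N-1},...,q^{μ_N})/s_λ(q^{N-1},...,1). -/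
open Finset

/-- The Schur polynomial in `N` variables evaluated at `x`, via the bialternant formula
`s_λ(x) = det[xᵢ^(λⱼ+N-j)] / ∏_{i<j} (xᵢ - xⱼ)`. -/
noncomputable def schurEval (N : ℕ) (lam : Fin N → ℕ) (x : Fin N → ℝ) : ℝ :=
  (Matrix.det (Matrix.of fun i j : Fin N => x i ^ (lam j + (N - 1 - (j : ℕ))))) /
    ∏ i : Fin N, ∏ j ∈ Finset.univ.filter (fun j => i < j), (x i - x j)

/-- Reversed Vandermonde determinant: `det [y_j ^ (N-1-i)]` equals the sign of the
reversal permutation times the Vandermonde product. -/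
lemma det_rev_vandermonde (N : ℕ) (y : Fin N → ℝ) :
    Matrix.det (Matrix.of fun i j : Fin N => y j ^ (N - 1 - (i : ℕ)))
      = ((Equiv.Perm.sign (Fin.revPerm : Equiv.Perm (Fin N)) : ℤ) : ℝ) *
        ∏ i : Fin N, ∏ j ∈ Finset.Ioi i, (y j - y i) := by
  have hM : (Matrix.of fun i j : Fin N => y j ^ (N - 1 - (i : ℕ)))
      = (Matrix.transpose (Matrix.vandermonde y)).submatrix (Fin.revPerm : Equiv.Perm (Fin N)) id := by
    ext i j
    simp only [Matrix.of_apply, Matrix.submatrix_apply, Matrix.transpose_apply,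
      Matrix.vandermonde_apply, id, Fin.revPerm_apply, Fin.val_rev]
    congr 1
    omega
  rw [hM, Matrix.det_permute, Matrix.det_transpose, Matrix.det_vandermonde]

/-- Swapping the order of differences in the Vandermonde product introduces a global sign. -/
lemma prod_pairs_swap (N : ℕ) (u : Fin N → ℝ) :
    ∏ i : Fin N, ∏ j ∈ Finset.Ioi i, (u j - u i)
      = (-1 : ℝ) ^ (∑ i : Fin N, (Finset.Ioi i).card) *
        ∏ i : Fin N, ∏ j ∈ Finset.Ioi i, (u i - u j) := by
  rw [← Finset.prod_pow_eq_pow_sum, ← Finset.prod_mul_distrib]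
  refine Finset.prod_congr rfl fun i _ => ?_
  rw [← Finset.prod_const, ← Finset.prod_mul_distrib]
  exact Finset.prod_congr rfl fun j _ => by ring

private lemma div_div_div_eq' (a b c d : ℝ) : a / b / (c / d) = a * d / (b * c) := by
  simp only [div_eq_mul_inv, mul_inv, inv_inv]
  ring

/-- Label–variable symmetry for principal specializations of Schur polynomials (`q = t` case):
`s_μ(q^{λ₁+N-1},...,q^{λ_N}) / s_μ(q^{N-1},...,1) = s_λ(q^{μ₁+N-1},...,q^{μ_N}) / s_λ(q^{N-1},...,1)`. -/
theorem schur_label_variable_symmetry (N : ℕ) (q : ℝ) (hq : 0 < q) (hq1 : q ≠ 1)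
    (lam mu : Fin N → ℕ) (hlam : Antitone lam) (hmu : Antitone mu) :
    schurEval N mu (fun i => q ^ (lam i + (N - 1 - (i : ℕ)))) /
        schurEval N mu (fun i => q ^ (N - 1 - (i : ℕ)))
      = schurEval N lam (fun i => q ^ (mu i + (N - 1 - (i : ℕ)))) /
          schurEval N lam (fun i => q ^ (N - 1 - (i : ℕ))) := by
  classical
  set a : Fin N → ℕ := fun i => lam i + (N - 1 - (i : ℕ)) with ha
  set b : Fin N → ℕ := fun i => mu i + (N - 1 - (i : ℕ)) with hb
  have hIoi : ∀ i : Fin N, Finset.univ.filter (fun j => i < j) = Finset.Ioi i := by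
    intro i; ext j; simp
  unfold schurEval
  simp only [hIoi]
  -- rewrite the two numerator determinants as a common determinant
  have h1 : (Matrix.of fun i j : Fin N => (fun i => q ^ a i) i ^ (mu j + (N - 1 - (j : ℕ))))
      = Matrix.of fun i j : Fin N => q ^ (a i * b j) := by
    ext i j; simp only [Matrix.of_apply, ← pow_mul]; rfl
  have h2 : (Matrix.of fun i j : Fin N => (fun i => q ^ b i) i ^ (lam j + (N - 1 - (j : ℕ))))
      = Matrix.of fun i j : Fin N => q ^ (b i * a j) := by
    ext i j; simp only [Matrix.of_apply, ← pow_mul]; rfl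
  have hdet : (Matrix.of fun i j : Fin N => q ^ (b i * a j)).det
      = (Matrix.of fun i j : Fin N => q ^ (a i * b j)).det := by
    rw [← Matrix.det_transpose (Matrix.of fun i j : Fin N => q ^ (a i * b j))]
    congr 1
    ext i j
    simp only [Matrix.transpose_apply, Matrix.of_apply, mul_comm]
  -- rewrite the two denominator determinants as reversed Vandermonde determinants
  have h3 : (Matrix.of fun i j : Fin N => (fun i => q ^ (N - 1 - (i : ℕ))) i ^ (mu j + (N - 1 - (j : ℕ))))
      = Matrix.of fun i j : Fin N => (fun k => q ^ b k) j ^ (N - 1 - (i : ℕ)) := by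
    ext i j; simp only [Matrix.of_apply, ← pow_mul]; rw [mul_comm]
  have h4 : (Matrix.of fun i j : Fin N => (fun i => q ^ (N - 1 - (i : ℕ))) i ^ (lam j + (N - 1 - (j : ℕ))))
      = Matrix.of fun i j : Fin N => (fun k => q ^ a k) j ^ (N - 1 - (i : ℕ)) := by
    ext i j; simp only [Matrix.of_apply, ← pow_mul]; rw [mul_comm]
  rw [h1, h2, hdet, h3, h4, det_rev_vandermonde, det_rev_vandermonde,
    prod_pairs_swap, prod_pairs_swap, div_div_div_eq', div_div_div_eq']
  congr 1
  ring
end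

section
/- For a monic real polynomial p of degree N with roots a_1,...,a_N (with multiplicity), and 0 ≤ k ≤ N, the k-th coefficient identity: (1/(N⋯(k+1))) p^{(N-k)}(z) = ∑_{ℓ=0}^{k} (-1)^ℓ e_ℓ(a) [C(k,ℓ)/C(N,ℓ)] z^{k-ℓ}, equivalently the roots of the normalized derivative have elementary symmetric functions e_ℓ(roots of p^{(N-k)}) = e_ℓ(a) · C(k,ℓ)/C(N,ℓ). -/
open Finset Polynomial

lemma desc_choose_identity {N k j : ℕ} (hj : j ≤ k) (hk : k ≤ N) :
    (((N - j).descFactorial (N - k) : ℝ)) * (N.choose j : ℝ)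
      = ((N.descFactorial (N - k) : ℝ)) * (k.choose j : ℝ) := by
  rw [Nat.descFactorial_eq_factorial_mul_choose, Nat.descFactorial_eq_factorial_mul_choose]
  push_cast
  rw [Nat.cast_choose ℝ (show N - k ≤ N - j from Nat.sub_le_sub_left hj N),
    Nat.cast_choose ℝ (show j ≤ N from hj.trans hk),
    Nat.cast_choose ℝ (Nat.sub_le N k),
    Nat.cast_choose ℝ hj,
    show N - j - (N - k) = k - j by omega,
    show N - (N - k) = k by omega]
  have h : ∀ n : ℕ, ((Nat.factorial n : ℝ)) ≠ 0 := fun n => Nat.cast_ne_zero.2 (Nat.factorial_ne_zero n)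
  field_simp

/-- For `p(z) = ∏ (z - aᵢ)` monic of degree `N` and `k ≤ N`:
`(1/(N⋯(k+1))) p^{(N-k)}(z) = ∑_{ℓ=0}^k (-1)^ℓ e_ℓ(a) (C(k,ℓ)/C(N,ℓ)) z^{k-ℓ}`. -/
theorem normalized_derivative_coeffs (N k : ℕ) (hk : k ≤ N) (a : Fin N → ℝ) :
    Polynomial.derivative^[N - k] (∏ i, (Polynomial.X - Polynomial.C (a i)))
      = Polynomial.C ((N.descFactorial (N - k) : ℝ)) *
          ∑ ℓ ∈ Finset.range (k + 1),
            Polynomial.C ((-1) ^ ℓ * esymmVal N ℓ a * ((k.choose ℓ : ℝ) / (N.choose ℓ : ℝ))) *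
              Polynomial.X ^ (k - ℓ) := by
  have hcard : Multiset.card (Finset.univ.val.map a) = N := by simp
  have key : (∏ i, (Polynomial.X - Polynomial.C (a i)))
      = ∑ j ∈ Finset.range (N + 1),
          Polynomial.C ((-1) ^ j * esymmVal N j a) * Polynomial.X ^ (N - j) := by
    calc (∏ i, (Polynomial.X - Polynomial.C (a i)))
        = ((Finset.univ.val.map a).map (fun t => Polynomial.X - Polynomial.C t)).prod := by
          rw [Multiset.map_map]; rfl
      _ = _ := by
          rw [Multiset.prod_X_sub_X_eq_sum_esymm, hcard]
          refine Finset.sum_congr rfl fun j _ => ?_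
          rw [Finset.esymm_map_val]
          simp only [esymmVal, map_mul, map_pow, map_neg, map_one]
          ring
  rw [key, Polynomial.iterate_derivative_sum]
  simp only [Polynomial.iterate_derivative_C_mul, Polynomial.iterate_derivative_X_pow_eq_C_mul]
  rw [Finset.mul_sum]
  rw [← Finset.sum_subset (Finset.range_subset_range.2 (by omega : k + 1 ≤ N + 1))]
  · refine Finset.sum_congr rfl fun j hj => ?_
    have hjk : j ≤ k := by simpa [Nat.lt_succ_iff] using Finset.mem_range.mp hj
    rw [show N - j - (N - k) = k - j by omega]
    rw [← mul_assoc, ← mul_assoc, ← Polynomial.C_mul, ← Polynomial.C_mul]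
    congr 2
    have hNj : ((N.choose j : ℝ)) ≠ 0 :=
      Nat.cast_ne_zero.2 (Nat.choose_pos (hjk.trans hk)).ne'
    have h := desc_choose_identity hjk hk
    field_simp
    linear_combination esymmVal N j a * h
  · intro j hjN hjk
    simp only [Finset.mem_range] at hjN hjk
    have : N - j < N - k := by omega
    rw [Nat.descFactorial_eq_zero_iff_lt.2 this]
    simp
end
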